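/- Let γ : ℝ → EuclideanSpace ℝ (Fin 3) be a smooth unit-speed curve, closed with period ℓ > 0, with nowhere-vanishing curvature κ(t) = ‖γ''(t)‖ > 0. Suppose N : ℝ → EuclideanSpace ℝ (Fin 3) is a smooth map with N(t + ℓ) = N(t), ‖N(t)‖ = 1, ⟨N(t), γ'(t)⟩ = 0 for all t, and such that for every t the vector N'(t) is a scalar multiple of γ'(t) (i.e., γ is a line of curvature of an oriented surface with unit normal N along γ). Then the total torsion ∫₀^ℓ τ(t) dt is an integer multiple of 2π, where τ(t) = ⟨γ'(t) ×₃ γ''(t), γ'''(t)⟩ / ‖γ''(t)‖². -/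

import Mathlib

open scoped RealInnerProductSpace

/-- The torsion of a unit-speed curve in `ℝ³` with nowhere-vanishing curvature:
`τ(t) = ⟨γ'(t) ×₃ γ''(t), γ'''(t)⟩ / ‖γ''(t)‖²`. -/
noncomputable def torsion3 (γ : ℝ → EuclideanSpace ℝ (Fin 3)) (t : ℝ) : ℝ :=
  (inner ℝ ((WithLp.equiv 2 (Fin 3 → ℝ)).symm
      (crossProduct (WithLp.equiv 2 (Fin 3 → ℝ) (deriv γ t))
        (WithLp.equiv 2 (Fin 3 → ℝ) (deriv (deriv γ) t))))
    (deriv (deriv (deriv γ)) t) : ℝ) / ‖deriv (deriv γ) t‖ ^ 2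

/-!
Let `T, n, B` be the Frenet frame of `γ`. Since `N ⊥ T`, we may write `N = a n + b B`, and the
Frenet equations together with Rodrigues' equation `N' ∥ T` give `a' = τ b` and `b' = -τ a`.
Hence `(a, b)` rotates with angular velocity `-τ`: rotating it back by `Θ(t) = ∫₀ᵗ τ` yields a
constant vector. As `(a, b)` is a unit vector and `ℓ`-periodic, rotation by `Θ(ℓ)` fixes it,
so `Θ(ℓ) ∈ 2πℤ`.
-/

local notation "E3" => EuclideanSpace ℝ (Fin 3)

section CrossProduct

/-- `crossProduct` transported to `EuclideanSpace ℝ (Fin 3)`; bundling it as a continuous bilinear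
map gives its derivative and continuity for free. -/
noncomputable def cross3 : E3 →L[ℝ] E3 →L[ℝ] E3 :=
  LinearMap.toContinuousLinearMap
    (LinearMap.toContinuousLinearMap.toLinearMap ∘ₗ
      ((crossProduct.compl₁₂ (WithLp.linearEquiv 2 ℝ (Fin 3 → ℝ)).toLinearMap
        (WithLp.linearEquiv 2 ℝ (Fin 3 → ℝ)).toLinearMap).compr₂
          (WithLp.linearEquiv 2 ℝ (Fin 3 → ℝ)).symm.toLinearMap))

theorem torsion3_eq (γ : ℝ → E3) (t : ℝ) :
    torsion3 γ t = ⟪cross3 (deriv γ t) (deriv (deriv γ) t), deriv (deriv (deriv γ)) t⟫ /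
      ‖deriv (deriv γ) t‖ ^ 2 :=
  rfl

theorem inner_cross3_self_left (u v : E3) : ⟪cross3 u v, u⟫ = 0 := by
  simp [EuclideanSpace.inner_eq_star_dotProduct, cross3]

theorem inner_cross3_self_right (u v : E3) : ⟪cross3 u v, v⟫ = 0 := by
  simp [EuclideanSpace.inner_eq_star_dotProduct, cross3]

theorem inner_cross3_cross3 (u v : E3) :
    ⟪cross3 u v, cross3 u v⟫ = ⟪u, u⟫ * ⟪v, v⟫ - ⟪u, v⟫ ^ 2 := by
  simp only [EuclideanSpace.inner_eq_star_dotProduct, star_trivial]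
  simp [cross3, cross_dot_cross, dotProduct_comm (WithLp.ofLp v)]
  ring

theorem inner_mul_gram_eq (T n u v : E3) :
    ⟪u, v⟫ * (⟪T, T⟫ * ⟪n, n⟫ - ⟪T, n⟫ ^ 2) =
      ⟪u, T⟫ * ⟪T, v⟫ * ⟪n, n⟫ + ⟪u, n⟫ * ⟪n, v⟫ * ⟪T, T⟫
        - (⟪u, T⟫ * ⟪n, v⟫ + ⟪u, n⟫ * ⟪T, v⟫) * ⟪T, n⟫
        + ⟪u, cross3 T n⟫ * ⟪cross3 T n, v⟫ := by
  simp only [PiLp.inner_apply, Fin.sum_univ_three, RCLike.inner_apply, conj_trivial]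
  simp [cross3, cross_apply]
  ring

variable {T n : E3}

theorem norm_cross3_of_orthonormal (hT : ‖T‖ = 1) (hn : ‖n‖ = 1) (hTn : ⟪T, n⟫ = 0) :
    ‖cross3 T n‖ = 1 := by
  have h := inner_cross3_cross3 T n
  rw [real_inner_self_eq_norm_sq, real_inner_self_eq_norm_sq, real_inner_self_eq_norm_sq, hT, hn,
    hTn] at h
  exact (pow_eq_one_iff_of_nonneg (norm_nonneg _) two_ne_zero).mp (by rw [h]; norm_num)

theorem inner_eq_sum_of_orthonormal (hT : ‖T‖ = 1) (hn : ‖n‖ = 1) (hTn : ⟪T, n⟫ = 0)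
    (u v : E3) :
    ⟪u, v⟫ = ⟪u, T⟫ * ⟪T, v⟫ + ⟪u, n⟫ * ⟪n, v⟫ + ⟪u, cross3 T n⟫ * ⟪cross3 T n, v⟫ := by
  simpa [real_inner_self_eq_norm_sq, hT, hn, hTn] using inner_mul_gram_eq T n u v

theorem inner_sq_add_inner_cross3_sq (hT : ‖T‖ = 1) (hn : ‖n‖ = 1) (hTn : ⟪T, n⟫ = 0) {u : E3}
    (huT : ⟪u, T⟫ = 0) : ⟪u, n⟫ ^ 2 + ⟪u, cross3 T n⟫ ^ 2 = ‖u‖ ^ 2 := by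
  rw [← real_inner_self_eq_norm_sq, inner_eq_sum_of_orthonormal hT hn hTn u u, huT,
    real_inner_comm n, real_inner_comm (cross3 T n)]
  ring

end CrossProduct

section Calculus

variable {E : Type*} [NormedAddCommGroup E] [InnerProductSpace ℝ E] {f g : ℝ → E} {t : ℝ}

theorem inner_deriv_add_inner_deriv_eq_zero {c : ℝ} (h : ∀ s, ⟪f s, g s⟫ = c)
    (hf : DifferentiableAt ℝ f t) (hg : DifferentiableAt ℝ g t) :
    ⟪deriv f t, g t⟫ + ⟪f t, deriv g t⟫ = 0 := by
  have hderiv := (hf.hasDerivAt.inner ℝ hg.hasDerivAt).deriv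
  rw [funext h, deriv_const] at hderiv
  linarith

theorem inner_deriv_eq_zero_of_forall_norm_eq {r : ℝ} (h : ∀ s, ‖f s‖ = r)
    (hf : DifferentiableAt ℝ f t) : ⟪f t, deriv f t⟫ = 0 := by
  have := inner_deriv_add_inner_deriv_eq_zero (c := r ^ 2)
    (fun s => by rw [real_inner_self_eq_norm_sq, h]) hf hf
  rw [real_inner_comm] at this
  linarith

theorem Differentiable.inv_norm (hf : Differentiable ℝ f) (h0 : ∀ t, f t ≠ 0) :
    Differentiable ℝ fun t => ‖f t‖⁻¹ := fun t =>
  ((hf t).norm ℝ (h0 t)).inv (norm_ne_zero_iff.mpr (h0 t))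

theorem Function.Periodic.deriv {c : ℝ} (h : Function.Periodic f c) :
    Function.Periodic (deriv f) c := fun t => by
  rw [← deriv_comp_add_const, h.funext]

end Calculus

section MovingFrame

variable {T n N : ℝ → E3} {τ : ℝ → ℝ}

theorem hasDerivAt_inner_of_rodrigues (hT : ∀ t, ‖T t‖ = 1) (hn : ∀ t, ‖n t‖ = 1)
    (hTn : ∀ t, ⟪T t, n t⟫ = 0) (hnd : Differentiable ℝ n)
    (hτ : ∀ t, ⟪cross3 (T t) (n t), deriv n t⟫ = τ t) (hNd : Differentiable ℝ N)
    (hNT : ∀ t, ⟪N t, T t⟫ = 0) (hRodrigues : ∀ t, ∃ c : ℝ, deriv N t = c • T t) (t : ℝ) :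
    HasDerivAt (fun s => ⟪N s, n s⟫) (τ t * ⟪N t, cross3 (T t) (n t)⟫) t := by
  obtain ⟨c, hc⟩ := hRodrigues t
  have hN'n : ⟪deriv N t, n t⟫ = 0 := by rw [hc, real_inner_smul_left, hTn t, mul_zero]
  have hNn' : ⟪N t, deriv n t⟫ = τ t * ⟪N t, cross3 (T t) (n t)⟫ := by
    rw [inner_eq_sum_of_orthonormal (hT t) (hn t) (hTn t) (N t), hNT t,
      inner_deriv_eq_zero_of_forall_norm_eq hn (hnd t), hτ t]
    ring
  exact ((hNd t).hasDerivAt.inner ℝ (hnd t).hasDerivAt).congr_deriv (by rw [hN'n, hNn', add_zero])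

theorem hasDerivAt_inner_cross3_of_rodrigues (hT : ∀ t, ‖T t‖ = 1) (hn : ∀ t, ‖n t‖ = 1)
    (hTn : ∀ t, ⟪T t, n t⟫ = 0) (hTd : Differentiable ℝ T) (hnd : Differentiable ℝ n)
    (hτ : ∀ t, ⟪cross3 (T t) (n t), deriv n t⟫ = τ t) (hNd : Differentiable ℝ N)
    (hNT : ∀ t, ⟪N t, T t⟫ = 0) (hRodrigues : ∀ t, ∃ c : ℝ, deriv N t = c • T t) (t : ℝ) :
    HasDerivAt (fun s => ⟪N s, cross3 (T s) (n s)⟫) (-(τ t * ⟪N t, n t⟫)) t := by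
  have hBd : Differentiable ℝ (fun s => cross3 (T s) (n s)) := by fun_prop
  obtain ⟨c, hc⟩ := hRodrigues t
  have hN'B : ⟪deriv N t, cross3 (T t) (n t)⟫ = 0 := by
    rw [hc, real_inner_smul_left, real_inner_comm, inner_cross3_self_left, mul_zero]
  have hBB' : ⟪cross3 (T t) (n t), deriv (fun s => cross3 (T s) (n s)) t⟫ = 0 :=
    inner_deriv_eq_zero_of_forall_norm_eq
      (fun s => norm_cross3_of_orthonormal (hT s) (hn s) (hTn s)) (hBd t)
  have hnB' : ⟪n t, deriv (fun s => cross3 (T s) (n s)) t⟫ = -τ t := by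
    have := inner_deriv_add_inner_deriv_eq_zero
      (fun s => (real_inner_comm _ _).trans (inner_cross3_self_right (T s) (n s))) (hnd t) (hBd t)
    rw [real_inner_comm, hτ t] at this
    linarith
  have hNB' : ⟪N t, deriv (fun s => cross3 (T s) (n s)) t⟫ = -(τ t * ⟪N t, n t⟫) := by
    rw [inner_eq_sum_of_orthonormal (hT t) (hn t) (hTn t) (N t), hNT t, hnB', hBB']
    ring
  exact ((hNd t).hasDerivAt.inner ℝ (hBd t).hasDerivAt).congr_deriv (by rw [hN'B, hNB', add_zero])

end MovingFrame

section Frenet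

noncomputable def frenetNormal (γ : ℝ → E3) (t : ℝ) : E3 :=
  ‖deriv (deriv γ) t‖⁻¹ • deriv (deriv γ) t

variable {γ : ℝ → E3}

theorem norm_frenetNormal {t : ℝ} (hcurv : deriv (deriv γ) t ≠ 0) : ‖frenetNormal γ t‖ = 1 :=
  norm_smul_inv_norm hcurv

theorem inner_deriv_frenetNormal (hγ : Differentiable ℝ (deriv γ))
    (hunit : ∀ t, ‖deriv γ t‖ = 1) (t : ℝ) : ⟪deriv γ t, frenetNormal γ t⟫ = 0 := by
  rw [frenetNormal, real_inner_smul_right, inner_deriv_eq_zero_of_forall_norm_eq hunit (hγ t),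
    mul_zero]

theorem Function.Periodic.frenetNormal {ℓ : ℝ} (h : Function.Periodic γ ℓ) :
    Function.Periodic (frenetNormal γ) ℓ := fun t => by
  simp only [_root_.frenetNormal, h.deriv.deriv t]

theorem differentiable_frenetNormal (hγ : Differentiable ℝ (deriv (deriv γ)))
    (hcurv : ∀ t, deriv (deriv γ) t ≠ 0) : Differentiable ℝ (frenetNormal γ) :=
  (hγ.inv_norm hcurv).smul hγ

theorem inner_cross3_deriv_frenetNormal (hγ : Differentiable ℝ (deriv (deriv γ)))
    (hcurv : ∀ t, deriv (deriv γ) t ≠ 0) (t : ℝ) :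
    ⟪cross3 (deriv γ t) (frenetNormal γ t), deriv (frenetNormal γ) t⟫ = torsion3 γ t := by
  have hn' : deriv (frenetNormal γ) t = ‖deriv (deriv γ) t‖⁻¹ • deriv (deriv (deriv γ)) t
      + deriv (fun s => ‖deriv (deriv γ) s‖⁻¹) t • deriv (deriv γ) t :=
    deriv_smul (hγ.inv_norm hcurv t) (hγ t)
  simp only [hn', frenetNormal, map_smul, inner_add_right, real_inner_smul_left,
    real_inner_smul_right, inner_cross3_self_right, mul_zero, add_zero, torsion3_eq]
  field_simp

theorem continuous_torsion3 (hγ : ContDiff ℝ 3 γ) (hcurv : ∀ t, deriv (deriv γ) t ≠ 0) :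
    Continuous (torsion3 γ) := by
  have h1 : ContDiff ℝ 2 (deriv γ) := hγ.deriv'
  have h2 : ContDiff ℝ 1 (deriv (deriv γ)) := h1.deriv'
  have hnum : Continuous fun t =>
      ⟪cross3 (deriv γ t) (deriv (deriv γ) t), deriv (deriv (deriv γ)) t⟫ := by
    have := h1.continuous
    have := h2.continuous
    have := h2.continuous_deriv le_rfl
    fun_prop
  exact hnum.div (h2.continuous.norm.pow 2) fun t => pow_ne_zero 2 (norm_ne_zero_iff.mpr (hcurv t))

end Frenet

theorem exists_integral_eq_two_pi_mul_of_rotation {a b τ : ℝ → ℝ} {ℓ : ℝ} (hτ : Continuous τ)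
    (ha : ∀ t, HasDerivAt a (τ t * b t) t) (hb : ∀ t, HasDerivAt b (-(τ t * a t)) t)
    (hab : a 0 ^ 2 + b 0 ^ 2 ≠ 0) (haℓ : a ℓ = a 0) (hbℓ : b ℓ = b 0) :
    ∃ n : ℤ, ∫ t in (0 : ℝ)..ℓ, τ t = 2 * Real.pi * n := by
  set Θ : ℝ → ℝ := fun s => ∫ t in (0 : ℝ)..s, τ t
  have hΘ : ∀ t, HasDerivAt Θ (τ t) t := fun t => (hτ.integral_hasStrictDerivAt 0 t).hasDerivAt
  have hP : ∀ t, HasDerivAt (fun s => a s * Real.cos (Θ s) - b s * Real.sin (Θ s)) 0 t :=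
    fun t => (((ha t).mul (hΘ t).cos).sub ((hb t).mul (hΘ t).sin)).congr_deriv (by ring)
  have hQ : ∀ t, HasDerivAt (fun s => a s * Real.sin (Θ s) + b s * Real.cos (Θ s)) 0 t :=
    fun t => (((ha t).mul (hΘ t).sin).add ((hb t).mul (hΘ t).cos)).congr_deriv (by ring)
  have hPℓ := is_const_of_deriv_eq_zero (fun t => (hP t).differentiableAt)
    (fun t => (hP t).deriv) ℓ 0
  have hQℓ := is_const_of_deriv_eq_zero (fun t => (hQ t).differentiableAt)
    (fun t => (hQ t).deriv) ℓ 0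
  simp only [Θ, haℓ, hbℓ, intervalIntegral.integral_same, Real.cos_zero, Real.sin_zero] at hPℓ hQℓ
  have hcos : (Real.cos (∫ t in (0 : ℝ)..ℓ, τ t) - 1) * (a 0 ^ 2 + b 0 ^ 2) = 0 := by
    linear_combination a 0 * hPℓ + b 0 * hQℓ
  obtain ⟨n, hn⟩ :=
    (Real.cos_eq_one_iff _).mp (sub_eq_zero.mp ((mul_eq_zero.mp hcos).resolve_right hab))
  exact ⟨n, by rw [← hn]; ring⟩

theorem total_torsion_of_closed_line_of_curvature_general
    (γ : ℝ → EuclideanSpace ℝ (Fin 3)) (ℓ : ℝ)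
    (hsmooth : ContDiff ℝ (⊤ : ℕ∞) γ)
    (hunit : ∀ t, ‖deriv γ t‖ = 1)
    (hclosed : ∀ t, γ (t + ℓ) = γ t)
    (hcurv : ∀ t, ‖deriv (deriv γ) t‖ > 0)
    (N : ℝ → EuclideanSpace ℝ (Fin 3))
    (hNsmooth : ContDiff ℝ (⊤ : ℕ∞) N)
    (hNclosed : ∀ t, N (t + ℓ) = N t)
    (hNunit : ∀ t, ‖N t‖ = 1)
    (hNorth : ∀ t, ⟪N t, deriv γ t⟫ = 0)
    (hRodrigues : ∀ t, ∃ c : ℝ, deriv N t = c • deriv γ t) :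
    ∃ n : ℤ, ∫ t in (0:ℝ)..ℓ, torsion3 γ t = 2 * Real.pi * n := by
  have hγ : ContDiff ℝ 3 γ := hsmooth.of_le (by norm_cast)
  have hγ1 : ContDiff ℝ 2 (deriv γ) := hγ.deriv'
  have hT : Differentiable ℝ (deriv γ) := hγ1.differentiable two_ne_zero
  have hγ'' : Differentiable ℝ (deriv (deriv γ)) := hγ1.deriv'.differentiable one_ne_zero
  have hκ : ∀ t, deriv (deriv γ) t ≠ 0 := fun t => norm_pos_iff.mp (hcurv t)
  have hn : ∀ t, ‖frenetNormal γ t‖ = 1 := fun t => norm_frenetNormal (hκ t)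
  have hTn := inner_deriv_frenetNormal hT hunit
  have hnd := differentiable_frenetNormal hγ'' hκ
  have hτ := inner_cross3_deriv_frenetNormal hγ'' hκ
  have hNd : Differentiable ℝ N := hNsmooth.differentiable (by norm_cast)
  have hTℓ := Function.Periodic.deriv hclosed 0
  have hnℓ := Function.Periodic.frenetNormal hclosed 0
  have hNℓ := hNclosed 0
  rw [zero_add] at hTℓ hnℓ hNℓ
  refine exists_integral_eq_two_pi_mul_of_rotation (continuous_torsion3 hγ hκ)
    (hasDerivAt_inner_of_rodrigues hunit hn hTn hnd hτ hNd hNorth hRodrigues)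
    (hasDerivAt_inner_cross3_of_rodrigues hunit hn hTn hT hnd hτ hNd hNorth hRodrigues)
    ?_ ?_ ?_
  · rw [inner_sq_add_inner_cross3_sq (hunit 0) (hn 0) (hTn 0) (hNorth 0), hNunit 0]
    norm_num
  · simp only [hNℓ, hnℓ]
  · simp only [hNℓ, hTℓ, hnℓ]

/-- The total torsion of a closed line of curvature of an oriented surface in `ℝ³`
is an integer multiple of `2π`. -/
theorem total_torsion_of_closed_line_of_curvature
    (γ : ℝ → EuclideanSpace ℝ (Fin 3)) (ℓ : ℝ) (hℓ : 0 < ℓ)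
    (hsmooth : ContDiff ℝ (⊤ : ℕ∞) γ)
    (hunit : ∀ t, ‖deriv γ t‖ = 1)
    (hclosed : ∀ t, γ (t + ℓ) = γ t)
    (hcurv : ∀ t, ‖deriv (deriv γ) t‖ > 0)
    (N : ℝ → EuclideanSpace ℝ (Fin 3))
    (hNsmooth : ContDiff ℝ (⊤ : ℕ∞) N)
    (hNclosed : ∀ t, N (t + ℓ) = N t)
    (hNunit : ∀ t, ‖N t‖ = 1)
    (hNorth : ∀ t, ⟪N t, deriv γ t⟫ = 0)
    (hRodrigues : ∀ t, ∃ c : ℝ, deriv N t = c • deriv γ t) :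
    ∃ n : ℤ, ∫ t in (0:ℝ)..ℓ, torsion3 γ t = 2 * Real.pi * n :=
  total_torsion_of_closed_line_of_curvature_general γ ℓ hsmooth hunit hclosed hcurv N hNsmooth
    hNclosed hNunit hNorth hRodrigues
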